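/- arXiv:cs/0612134 — 2 statements merged into one kernel-verified Lean document; each statement's English description precedes it below -/
import Mathlib

section
/- Let G be a connected reductive algebraic group over ℂ, V a finite-dimensional linear representation of G, and v ∈ ℙ(V) a point with stabilizer G_v. If S is an irreducible G-submodule of the degree-d component R[v]_d of the homogeneous coordinate ring of the projective closure of the G-orbit of v, then the dual module S* contains a G_v-submodule isomorphic to (ℂv)^{⊗d}, the d-th tensor power of the line ℂv. -/
open scoped BigOperators TensorProduct

universe u v w

/-- `G` is linearly reductive over `ℂ`: every invariant subspace of a finite-dimensional
representation admits an invariant complement. -/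
def LinearlyReductive (G : Type u) [Group G] : Prop :=
  ∀ (V : Type) (_ : AddCommGroup V) (_ : Module ℂ V) (_ : FiniteDimensional ℂ V)
    (ρ : Representation ℂ G V) (p : Submodule ℂ V),
    (∀ g : G, ∀ x ∈ p, ρ g x ∈ p) →
      ∃ q : Submodule ℂ V, (∀ g : G, ∀ x ∈ q, ρ g x ∈ q) ∧ IsCompl p q

variable {G : Type u} [Group G]

/-- The representation of `G` on `ℂ`-valued functions on a linear `G`-space,
`(g • f) x = f (g⁻¹ • x)`. -/
noncomputable def coordAct {V : Type v} [AddCommGroup V] [Module ℂ V]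
    (ρ : Representation ℂ G V) : Representation ℂ G (V → ℂ) where
  toFun g :=
    { toFun := fun f x => f (ρ g⁻¹ x)
      map_add' := fun _ _ => rfl
      map_smul' := fun _ _ => rfl }
  map_one' := by
    ext f x
    simp
  map_mul' g h := by
    ext f x
    simp [mul_inv_rev]

/-- The left regular representation of `G` on `ℂ`-valued functions on `G`. -/
noncomputable def leftReg (G : Type u) [Group G] : Representation ℂ G (G → ℂ) where
  toFun g :=
    { toFun := fun f x => f (g⁻¹ * x)
      map_add' := fun _ _ => rfl
      map_smul' := fun _ _ => rfl }
  map_one' := by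
    ext f x
    simp
  map_mul' g h := by
    ext f x
    simp [mul_inv_rev, mul_assoc]

/-- Degree-`d` homogeneous polynomial functions on `V`: the span of `d`-fold products of
linear functionals. -/
noncomputable def polyDeg (V : Type v) [AddCommGroup V] [Module ℂ V] (d : ℕ) :
    Submodule ℂ (V → ℂ) :=
  Submodule.span ℂ {f | ∃ φ : Fin d → (V →ₗ[ℂ] ℂ), f = fun x => ∏ i, φ i x}

/-- Restriction of a function on `V` to the `G`-orbit of `v`, as a function on `G`. -/
noncomputable def orbRes {V : Type v} [AddCommGroup V] [Module ℂ V]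
    (ρ : Representation ℂ G V) (v : V) : (V → ℂ) →ₗ[ℂ] (G → ℂ) where
  toFun f := fun g => f (ρ g v)
  map_add' _ _ := rfl
  map_smul' _ _ := rfl

/-- The degree-`d` component of the homogeneous coordinate ring of the projective closure of the
orbit of `v`, realized as a space of functions on `G` (restrictions of degree-`d` forms to the
orbit of `v`). -/
noncomputable def orbitRing {V : Type v} [AddCommGroup V] [Module ℂ V]
    (ρ : Representation ℂ G V) (v : V) (d : ℕ) : Submodule ℂ (G → ℂ) :=
  (polyDeg V d).map (orbRes ρ v)

/-- A submodule is invariant under a representation. -/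
def InvariantSub {M : Type w} [AddCommGroup M] [Module ℂ M]
    (σ : Representation ℂ G M) (S : Submodule ℂ M) : Prop :=
  ∀ g : G, ∀ x ∈ S, σ g x ∈ S

/-- A submodule is an irreducible subrepresentation. -/
def IsIrreducibleSub {M : Type w} [AddCommGroup M] [Module ℂ M]
    (σ : Representation ℂ G M) (S : Submodule ℂ M) : Prop :=
  S ≠ ⊥ ∧ InvariantSub σ S ∧
    ∀ T : Submodule ℂ M, T ≤ S → InvariantSub σ T → T = ⊥ ∨ T = S

/-- Two invariant submodules are isomorphic as representations of `G`. -/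
def RepIso {M₁ : Type v} {M₂ : Type w} [AddCommGroup M₁] [Module ℂ M₁]
    [AddCommGroup M₂] [Module ℂ M₂]
    (σ₁ : Representation ℂ G M₁) (σ₂ : Representation ℂ G M₂)
    (S₁ : Submodule ℂ M₁) (S₂ : Submodule ℂ M₂) : Prop :=
  ∃ e : S₁ ≃ₗ[ℂ] S₂, ∀ g : G, ∀ x y : S₁,
    σ₁ g (x : M₁) = (y : M₁) → σ₂ g ((e x : S₂) : M₂) = ((e y : S₂) : M₂)

/-- The representation `(W, ρW)` occurs in the invariant subspace `S` of `(M, σ)`. -/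
def RepOccursIn {W : Type v} {M : Type w} [AddCommGroup W] [Module ℂ W]
    [AddCommGroup M] [Module ℂ M] (ρW : Representation ℂ G W)
    (σ : Representation ℂ G M) (S : Submodule ℂ M) : Prop :=
  ∃ T : Submodule ℂ M, T ≤ S ∧ InvariantSub σ T ∧ RepIso ρW σ (⊤ : Submodule ℂ W) T

/-- The space of `G`-equivariant linear maps between two representations. -/
def equivMaps {W : Type v} {M : Type w} [AddCommGroup W] [Module ℂ W]
    [AddCommGroup M] [Module ℂ M] (ρW : Representation ℂ G W)
    (σ : Representation ℂ G M) : Submodule ℂ (W →ₗ[ℂ] M) where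
  carrier := {f | ∀ (g : G) (x : W), f (ρW g x) = σ g (f x)}
  add_mem' := by
    intro a b ha hb g x
    simp [ha g x, hb g x]
  zero_mem' := by
    intro g x
    simp
  smul_mem' := by
    intro c a ha g x
    simp [ha g x]

/-- Linear maps with range inside a given submodule. -/
def homInto {W : Type v} {M : Type w} [AddCommGroup W] [Module ℂ W]
    [AddCommGroup M] [Module ℂ M] (C : Submodule ℂ M) : Submodule ℂ (W →ₗ[ℂ] M) where
  carrier := {f | ∀ x : W, f x ∈ C}
  add_mem' := by
    intro a b ha hb x
    exact C.add_mem (ha x) (hb x)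
  zero_mem' := by
    intro x
    simp
  smul_mem' := by
    intro c a ha x
    exact C.smul_mem c (ha x)

/-- The multiplicity of `(W, ρW)` in the invariant subspace `S` of `(M, σ)`:
the dimension of the space of equivariant maps `W → M` with image inside `S`. -/
noncomputable def multIn {W : Type v} {M : Type w} [AddCommGroup W] [Module ℂ W]
    [AddCommGroup M] [Module ℂ M] (ρW : Representation ℂ G W)
    (σ : Representation ℂ G M) (S : Submodule ℂ M) : ℕ :=
  Module.finrank ℂ (equivMaps ρW σ ⊓ homInto (W := W) S : Submodule ℂ (W →ₗ[ℂ] M))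

/-- The restriction of a representation to an invariant submodule. -/
noncomputable def subRep {M : Type w} [AddCommGroup M] [Module ℂ M]
    (σ : Representation ℂ G M) (S : Submodule ℂ M) (h : InvariantSub σ S) :
    Representation ℂ G S where
  toFun g := (σ g).restrict (h g)
  map_one' := by
    ext x
    simp [LinearMap.restrict_apply]
  map_mul' g₁ g₂ := by
    ext x
    simp [LinearMap.restrict_apply]


lemma polyDeg_homog {V : Type v} [AddCommGroup V] [Module ℂ V] {d : ℕ} {f : V → ℂ}
    (hf : f ∈ polyDeg V d) (c : ℂ) (w : V) : f (c • w) = c ^ d * f w := by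
  induction hf using Submodule.span_induction with
  | mem f hf =>
    obtain ⟨φ, rfl⟩ := hf
    simp [Finset.prod_mul_distrib, mul_comm]
  | zero => simp
  | add f g _ _ hf hg => simp [Pi.add_apply, hf, hg, mul_add]
  | smul a f _ hf => simp [Pi.smul_apply, hf]; ring

/-- Let `G` be a connected reductive algebraic group over `ℂ`, `V` a
finite-dimensional linear representation of `G`, and `v ∈ ℙ(V)` a point with stabilizer `G_v`.
If `S` is an irreducible `G`-submodule of the degree-`d` component `R[v]_d` of the homogeneous
coordinate ring of the projective closure of the `G`-orbit of `v`, then the dual module `S*`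
contains a `G_v`-submodule isomorphic to `(ℂ v)^{⊗ d}`: there is a nonzero linear functional
`ξ` on `S` on which every `g ∈ G_v` (acting on the dual) acts by the character `c ^ d`,
where `ρ g v̂ = c • v̂`. -/
theorem stmt0 {G : Type} [Group G] [TopologicalSpace G] [IsTopologicalGroup G] [ConnectedSpace G]
    (hred : LinearlyReductive G)
    {V : Type} [AddCommGroup V] [Module ℂ V] [FiniteDimensional ℂ V]
    (ρ : Representation ℂ G V) (vhat : V) (hv : vhat ≠ 0) (d : ℕ)
    (S : Submodule ℂ (G → ℂ)) (hSle : S ≤ orbitRing ρ vhat d)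
    (hS : IsIrreducibleSub (leftReg G) S) :
    ∃ ξ : S →ₗ[ℂ] ℂ, ξ ≠ 0 ∧
      ∀ (g : G) (c : ℂ), ρ g vhat = c • vhat →
        ∀ x y : S, leftReg G g⁻¹ (x : G → ℂ) = (y : G → ℂ) → ξ y = c ^ d * ξ x := by

  refine ⟨{ toFun := fun x => (x : G → ℂ) 1,
            map_add' := fun x y => rfl,
            map_smul' := fun c x => rfl }, ?_, ?_⟩
  · intro h0
    apply hS.1
    rw [Submodule.eq_bot_iff]
    intro x hx
    funext g
    have hinv : leftReg G g⁻¹ x ∈ S := hS.2.1 g⁻¹ x hx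
    have := LinearMap.congr_fun h0 ⟨leftReg G g⁻¹ x, hinv⟩
    simpa [leftReg] using this
  · intro g c hc x y hxy
    have hy1 : (y : G → ℂ) 1 = (x : G → ℂ) g := by
      rw [← hxy]; simp [leftReg]
    obtain ⟨f, hf, hfx⟩ := hSle x.2
    have hxg : ∀ h : G, (x : G → ℂ) h = f (ρ h vhat) := by
      intro h; rw [← hfx]; rfl
    simp only [LinearMap.coe_mk, AddHom.coe_mk, hy1, hxg]
    rw [hc, polyDeg_homog hf, map_one]
    simp
end

section
/- Let K be a connected reductive group, R ⊆ K a reductive subgroup, W a linear K-representation, y ∈ ℙ(W), and Y the smallest R-submodule of W containing ŷ. If an irreducible K-module V_β(K) occurs in R_W[y]_d, then some irreducible R-module V_α(R) occurring in V_β(K) (as an R-module) occurs in R_Y[y]_d. Conversely, if V_α(R) occurs in R_Y[y]_d then there is an irreducible K-module V_β(K) occurring in R_W[y]_d whose restriction to R contains V_α(R). -/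
open scoped BigOperators TensorProduct

universe u v w

variable {G : Type u} [Group G]

section Helpers

variable {M₁ : Type v} {M₂ : Type w} [AddCommGroup M₁] [Module ℂ M₁]
  [AddCommGroup M₂] [Module ℂ M₂]

/-- `F` is an equivariant linear map from `(M₁, σ₁)` to `(M₂, σ₂)`. -/
def EqMap (σ₁ : Representation ℂ G M₁) (σ₂ : Representation ℂ G M₂)
    (F : M₁ →ₗ[ℂ] M₂) : Prop :=
  ∀ (g : G) (x : M₁), F (σ₁ g x) = σ₂ g (F x)

variable {σ₁ : Representation ℂ G M₁} {σ₂ : Representation ℂ G M₂} {F : M₁ →ₗ[ℂ] M₂}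

lemma invSub_map (hF : EqMap σ₁ σ₂ F) {S : Submodule ℂ M₁} (hS : InvariantSub σ₁ S) :
    InvariantSub σ₂ (S.map F) := by
  rintro g _ ⟨x, hx, rfl⟩
  exact ⟨σ₁ g x, hS g x hx, hF g x⟩

lemma invSub_comap (hF : EqMap σ₁ σ₂ F) {S : Submodule ℂ M₂} (hS : InvariantSub σ₂ S) :
    InvariantSub σ₁ (S.comap F) := by
  intro g x hx
  simp only [Submodule.mem_comap] at hx ⊢
  rw [hF]
  exact hS g _ hx

lemma invSub_inf {S T : Submodule ℂ M₁} (hS : InvariantSub σ₁ S) (hT : InvariantSub σ₁ T) :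
    InvariantSub σ₁ (S ⊓ T) := fun g x hx => ⟨hS g x hx.1, hT g x hx.2⟩

lemma repIso_trans {M₃ : Type w} [AddCommGroup M₃] [Module ℂ M₃]
    {σ₃ : Representation ℂ G M₃} {S₁ : Submodule ℂ M₁} {S₂ : Submodule ℂ M₂}
    {S₃ : Submodule ℂ M₃} (h₁ : RepIso σ₁ σ₂ S₁ S₂) (h₂ : RepIso σ₂ σ₃ S₂ S₃) :
    RepIso σ₁ σ₃ S₁ S₃ := by
  obtain ⟨e₁, he₁⟩ := h₁
  obtain ⟨e₂, he₂⟩ := h₂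
  exact ⟨e₁.trans e₂, fun g x y hxy => he₂ g (e₁ x) (e₁ y) (he₁ g x y hxy)⟩

lemma repIso_symm {S₁ : Submodule ℂ M₁} {S₂ : Submodule ℂ M₂}
    (hinv : InvariantSub σ₁ S₁) (h : RepIso σ₁ σ₂ S₁ S₂) : RepIso σ₂ σ₁ S₂ S₁ := by
  obtain ⟨e, he⟩ := h
  refine ⟨e.symm, fun g u v huv => ?_⟩
  set x := e.symm u with hxdef
  set y : S₁ := ⟨σ₁ g (x : M₁), hinv g _ x.2⟩ with hydef
  have h1 : σ₂ g ((e x : S₂) : M₂) = ((e y : S₂) : M₂) := he g x y rfl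
  rw [hxdef, e.apply_symm_apply] at h1
  have h2 : ((e y : S₂) : M₂) = (v : M₂) := by rw [← h1, huv]
  have h3 : e y = v := Subtype.ext h2
  have h4 : y = e.symm v := by rw [← h3, e.symm_apply_apply]
  show σ₁ g ((x : M₁)) = ((e.symm v : S₁) : M₁)
  rw [← h4]

lemma mapRepIso (hF : EqMap σ₁ σ₂ F) (S : Submodule ℂ M₁)
    (hinj : ∀ x ∈ S, F x = 0 → x = 0) : RepIso σ₁ σ₂ S (S.map F) := by
  have hker : Function.Injective (F.comp S.subtype) := by
    rw [← LinearMap.ker_eq_bot]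
    rw [eq_bot_iff]
    intro x hx
    have : F (x : M₁) = 0 := hx
    have := hinj _ x.2 this
    simpa [Submodule.mem_bot] using Subtype.ext this
  have hrange : LinearMap.range (F.comp S.subtype) = S.map F := by
    rw [LinearMap.range_comp, Submodule.range_subtype]
  set e : ↥S ≃ₗ[ℂ] ↥(S.map F) :=
    LinearEquiv.trans (LinearEquiv.ofInjective (F.comp S.subtype) hker)
      (LinearEquiv.ofEq _ _ hrange) with hedef
  refine ⟨e, fun g x y hxy => ?_⟩
  have hco : ∀ z : S, ((e z : S.map F) : M₂) = F (z : M₁) := by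
    intro z
    simp [hedef, LinearEquiv.trans_apply, LinearEquiv.coe_ofEq_apply, LinearEquiv.ofInjective_apply]
  rw [hco x, hco y, ← hF, hxy]

lemma mapIrr (hF : EqMap σ₁ σ₂ F) {S : Submodule ℂ M₁} (hSinv : InvariantSub σ₁ S)
    (hinj : ∀ x ∈ S, F x = 0 → x = 0) :
    IsIrreducibleSub σ₁ S ↔ IsIrreducibleSub σ₂ (S.map F) := by
  constructor
  · rintro ⟨hne, hinv, hmin⟩
    refine ⟨?_, invSub_map hF hinv, ?_⟩
    · obtain ⟨x, hx, hxne⟩ := (Submodule.ne_bot_iff _).mp hne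
      exact (Submodule.ne_bot_iff _).mpr
        ⟨F x, Submodule.mem_map_of_mem hx, fun h => hxne (hinj x hx h)⟩
    · intro T hT hTinv
      rcases hmin (S ⊓ T.comap F) inf_le_left (invSub_inf hinv (invSub_comap hF hTinv)) with h | h
      · left
        rw [eq_bot_iff]
        intro x hxT
        obtain ⟨s, hs, rfl⟩ := hT hxT
        have hmem : s ∈ S ⊓ T.comap F := ⟨hs, hxT⟩
        rw [h] at hmem
        simp only [Submodule.mem_bot] at hmem
        simp [hmem]
      · right
        apply le_antisymm hT
        rintro _ ⟨s, hs, rfl⟩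
        have hmem : s ∈ S ⊓ T.comap F := h.symm ▸ hs
        exact hmem.2
  · rintro ⟨hne, _, hmin⟩
    refine ⟨?_, hSinv, ?_⟩
    · rintro rfl
      exact hne (by simp)
    · intro T hTS hTinv
      rcases hmin (T.map F) (Submodule.map_mono hTS) (invSub_map hF hTinv) with h | h
      · left
        rw [eq_bot_iff]
        intro x hx
        have h0 : F x = 0 := by
          have : F x ∈ T.map F := Submodule.mem_map_of_mem hx
          rw [h] at this
          simpa using this
        simpa [Submodule.mem_bot] using hinj x (hTS hx) h0
      · right
        apply le_antisymm hTS
        intro s hs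
        have hmem : F s ∈ T.map F := by rw [h]; exact Submodule.mem_map_of_mem hs
        obtain ⟨t, ht, hts⟩ := hmem
        have hsub : (s : M₁) - t ∈ S := S.sub_mem hs (hTS ht)
        have h0 : F (s - t) = 0 := by rw [map_sub, hts, sub_self]
        have hst : s - t = 0 := hinj _ hsub h0
        have : s = t := by rwa [sub_eq_zero] at hst
        exact this ▸ ht

/-- Any nonzero finite-dimensional invariant submodule contains an irreducible one. -/
lemma exists_irred {M : Type v} [AddCommGroup M] [Module ℂ M] (σ : Representation ℂ G M) :
    ∀ (n : ℕ) (S : Submodule ℂ M), FiniteDimensional ℂ S → Module.finrank ℂ S ≤ n →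
      InvariantSub σ S → S ≠ ⊥ → ∃ T, T ≤ S ∧ IsIrreducibleSub σ T := by
  intro n
  induction n with
  | zero =>
    intro S hfd hrk hinv hne
    haveI := hfd
    exact absurd (Submodule.finrank_eq_zero.mp (Nat.le_zero.mp hrk)) hne
  | succ n ih =>
    intro S hfd hrk hinv hne
    haveI := hfd
    by_cases h : ∃ T, T ≤ S ∧ InvariantSub σ T ∧ T ≠ ⊥ ∧ T ≠ S
    · obtain ⟨T, hTS, hTinv, hTne, hTneS⟩ := h
      haveI : FiniteDimensional ℂ T := Submodule.finiteDimensional_of_le hTS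
      have hlt : Module.finrank ℂ T < Module.finrank ℂ S :=
        Submodule.finrank_lt_finrank_of_lt (lt_of_le_of_ne hTS hTneS)
      obtain ⟨T', hT'T, hT'⟩ := ih T ‹_› (by omega) hTinv hTne
      exact ⟨T', hT'T.trans hTS, hT'⟩
    · push_neg at h
      exact ⟨S, le_rfl, hne, hinv, fun T hTS hTinv => by
        by_contra hc
        push_neg at hc
        exact hc.2 (h T hTS hTinv hc.1)⟩

/-- Invariant complements inside invariant finite-dimensional submodules,
for linearly reductive groups. -/
lemma exists_compl (hG : LinearlyReductive G) {M : Type} [AddCommGroup M]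
    [Module ℂ M] (σ : Representation ℂ G M) (P N : Submodule ℂ M)
    (hfd : FiniteDimensional ℂ P) (hP : InvariantSub σ P) (hN : InvariantSub σ N)
    (hNP : N ≤ P) : ∃ Q, Q ≤ P ∧ InvariantSub σ Q ∧ N ⊓ Q = ⊥ ∧ N ⊔ Q = P := by
  haveI := hfd
  have hpinv : ∀ g : G, ∀ x ∈ N.comap P.subtype, subRep σ P hP g x ∈ N.comap P.subtype := by
    intro g x hx
    simp only [Submodule.mem_comap] at hx ⊢
    exact hN g _ hx
  obtain ⟨q, hqinv, hcompl⟩ := hG ↥P inferInstance inferInstance inferInstance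
    (subRep σ P hP) (N.comap P.subtype) hpinv
  refine ⟨q.map P.subtype, Submodule.map_subtype_le _ _, ?_, ?_, ?_⟩
  · rintro g _ ⟨x, hx, rfl⟩
    exact ⟨subRep σ P hP g x, hqinv g x hx, rfl⟩
  · have hN' : (N.comap P.subtype).map P.subtype = N := by
      rw [Submodule.map_comap_subtype]
      exact inf_eq_right.mpr hNP
    rw [← hN', ← Submodule.map_inf _ (Submodule.injective_subtype P),
      hcompl.inf_eq_bot, Submodule.map_bot]
  · have hN' : (N.comap P.subtype).map P.subtype = N := by
      rw [Submodule.map_comap_subtype]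
      exact inf_eq_right.mpr hNP
    rw [← hN', ← Submodule.map_sup, hcompl.sup_eq_top, Submodule.map_top,
      Submodule.range_subtype]

/-- The quotient representation on `M ⧸ U` for an invariant submodule `U`. -/
noncomputable def quotRep {M : Type v} [AddCommGroup M] [Module ℂ M]
    (σ : Representation ℂ G M) (U : Submodule ℂ M) (hU : InvariantSub σ U) :
    Representation ℂ G (M ⧸ U) where
  toFun g := Submodule.mapQ U U (σ g) (fun x hx => hU g x hx)
  map_one' := by
    apply Submodule.linearMap_qext
    ext x
    simp [Submodule.mapQ_apply]
  map_mul' g h := by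
    apply Submodule.linearMap_qext
    ext x
    simp [Submodule.mapQ_apply]

lemma quotRep_eqMap {M : Type v} [AddCommGroup M] [Module ℂ M]
    (σ : Representation ℂ G M) (U : Submodule ℂ M) (hU : InvariantSub σ U) :
    EqMap σ (quotRep σ U hU) U.mkQ := by
  intro g x
  simp [quotRep, Submodule.mapQ_apply, Submodule.mkQ_apply]

end Helpers

section Restriction

variable {K : Type u} [Group K]

/-- Restriction of functions on `K` to a subgroup `R`. -/
noncomputable def resMap (R : Subgroup K) : (K → ℂ) →ₗ[ℂ] (↥R → ℂ) where
  toFun f := fun r => f ↑r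
  map_add' _ _ := rfl
  map_smul' _ _ := rfl

lemma resMap_eqMap (R : Subgroup K) :
    EqMap ((leftReg K).comp R.subtype) (leftReg ↥R) (resMap R) := by
  intro g f
  funext r
  rfl

lemma invSub_restrict {M : Type v} [AddCommGroup M] [Module ℂ M] (R : Subgroup K)
    {σ : Representation ℂ K M} {S : Submodule ℂ M} (hS : InvariantSub σ S) :
    InvariantSub (σ.comp R.subtype) S := fun g x hx => hS (↑g) x hx

/-- The key induction: any `R`-irreducible inside a finite-dimensional `K`-invariant
submodule is isomorphic to an `R`-irreducible inside a `K`-irreducible submodule. -/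
lemma induct_lemma {K : Type} [Group K] (hred : LinearlyReductive K) (R : Subgroup K)
    {M : Type} [AddCommGroup M] [Module ℂ M] (σ : Representation ℂ K M) :
    ∀ (n : ℕ) (U : Submodule ℂ M), FiniteDimensional ℂ U → Module.finrank ℂ U ≤ n →
      InvariantSub σ U → ∀ S' : Submodule ℂ M, S' ≤ U →
      IsIrreducibleSub (σ.comp R.subtype) S' →
      ∃ S, S ≤ U ∧ IsIrreducibleSub σ S ∧ ∃ S'', S'' ≤ S ∧
        IsIrreducibleSub (σ.comp R.subtype) S'' ∧
        RepIso (σ.comp R.subtype) (σ.comp R.subtype) S'' S' := by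
  intro n
  induction n with
  | zero =>
    intro U hfd hrk hU S' hS'U hS'
    haveI := hfd
    have hUbot : U = ⊥ := Submodule.finrank_eq_zero.mp (Nat.le_zero.mp hrk)
    exact absurd (le_bot_iff.mp (hUbot ▸ hS'U)) hS'.1
  | succ n ih =>
    intro U hfd hrk hU S' hS'U hS'
    haveI := hfd
    have hUne : U ≠ ⊥ := fun h => hS'.1 (le_bot_iff.mp (h ▸ hS'U))
    obtain ⟨U₁, hU₁U, hU₁irr⟩ :=
      exists_irred σ (Module.finrank ℂ U) U hfd le_rfl hU hUne
    obtain ⟨U₂, hU₂U, hU₂inv, hinf, hsup⟩ :=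
      exists_compl hred σ U U₁ hfd hU hU₁irr.2.1 hU₁U
    by_cases hcase : S' ≤ U₂
    · have hU₂lt : U₂ < U := lt_of_le_of_ne hU₂U (fun h => hU₁irr.1 (by
        have h1 : U₁ ≤ U₂ := h ▸ hU₁U
        have h2 : U₁ ≤ U₁ ⊓ U₂ := le_inf le_rfl h1
        rw [hinf] at h2
        exact le_bot_iff.mp h2))
      haveI : FiniteDimensional ℂ U₂ := Submodule.finiteDimensional_of_le hU₂U
      have hrk₂ : Module.finrank ℂ U₂ ≤ n := by
        have := Submodule.finrank_lt_finrank_of_lt hU₂lt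
        omega
      obtain ⟨S, hSU₂, rest⟩ := ih U₂ ‹_› hrk₂ hU₂inv S' hcase hS'
      exact ⟨S, hSU₂.trans hU₂U, rest⟩
    · set σ' := σ.comp R.subtype with hσ'
      set q := U₂.mkQ with hqdef
      set σQ := quotRep σ U₂ hU₂inv with hσQ
      have hq : EqMap σ σQ q := quotRep_eqMap σ U₂ hU₂inv
      have hq' : EqMap σ' (σQ.comp R.subtype) q := fun g x => hq (↑g) x
      have hdisj' : ∀ x ∈ S', q x = 0 → x = 0 := by
        intro x hx hqx
        have hxU₂ : x ∈ U₂ := by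
          rw [← Submodule.ker_mkQ U₂]
          exact hqx
        rcases hS'.2.2 (S' ⊓ U₂) inf_le_left
            (invSub_inf hS'.2.1 (invSub_restrict R hU₂inv)) with h | h
        · have : x ∈ S' ⊓ U₂ := ⟨hx, hxU₂⟩
          rw [h] at this
          simpa using this
        · exact absurd (by rw [← h]; exact inf_le_right) hcase
      set S'' := U₁ ⊓ Submodule.comap q (S'.map q) with hS''def
      have hS''U₁ : S'' ≤ U₁ := inf_le_left
      have hS''inv : InvariantSub σ' S'' :=
        invSub_inf (invSub_restrict R hU₁irr.2.1) (invSub_comap hq' (invSub_map hq' hS'.2.1))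
      have hmapeq : S''.map q = S'.map q := by
        apply le_antisymm
        · rintro _ ⟨x, hx, rfl⟩
          exact hx.2
        · rintro _ ⟨s, hs, rfl⟩
          have hsU : s ∈ U₁ ⊔ U₂ := by rw [hsup]; exact hS'U hs
          obtain ⟨a, ha, b, hb, hab⟩ := Submodule.mem_sup.mp hsU
          have hqb : q b = 0 := by
            rw [hqdef]
            simpa [Submodule.Quotient.mk_eq_zero] using hb
          have heq : q s = q a := by
            rw [← hab, map_add, hqb, add_zero]
          rw [heq]
          exact ⟨a, ⟨ha, Submodule.mem_comap.mpr (by rw [← heq]; exact Submodule.mem_map_of_mem hs)⟩, rfl⟩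
      have hdisj'' : ∀ x ∈ S'', q x = 0 → x = 0 := by
        intro x hx hqx
        have hxU₂ : x ∈ U₂ := by
          rw [← Submodule.ker_mkQ U₂]
          exact hqx
        have : x ∈ U₁ ⊓ U₂ := ⟨hx.1, hxU₂⟩
        rw [hinf] at this
        simpa using this
      have hiso₁ := mapRepIso hq' S'' hdisj''
      have hiso₂ := mapRepIso hq' S' hdisj'
      rw [hmapeq] at hiso₁
      have hirr_map : IsIrreducibleSub (σQ.comp R.subtype) (S'.map q) :=
        (mapIrr hq' hS'.2.1 hdisj').mp hS'
      have hS''irr : IsIrreducibleSub σ' S'' :=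
        (mapIrr hq' hS''inv hdisj'').mpr (by rw [hmapeq]; exact hirr_map)
      exact ⟨U₁, hU₁U, hU₁irr, S'', hS''U₁, hS''irr,
        repIso_trans hiso₁ (repIso_symm hS'.2.1 hiso₂)⟩

end Restriction

section Orbit

variable {K : Type u} [Group K]

lemma polyDeg_findim (V : Type) [AddCommGroup V] [Module ℂ V] [FiniteDimensional ℂ V]
    (d : ℕ) : FiniteDimensional ℂ (polyDeg V d) := by
  classical
  set n := Module.finrank ℂ V with hn
  set b := Module.finBasis ℂ V with hb
  have hle : polyDeg V d ≤ Submodule.span ℂ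
      (Set.range fun m : Fin d → Fin n => fun x : V => ∏ i, b.coord (m i) x) := by
    rw [polyDeg, Submodule.span_le]
    rintro _ ⟨φ, rfl⟩
    have hf : (fun x : V => ∏ i, φ i x) =
        ∑ m : Fin d → Fin n, (∏ i, φ i (b (m i))) •
          (fun x : V => ∏ i, b.coord (m i) x) := by
      funext x
      have h1 : ∀ i : Fin d, φ i x = ∑ j, b.repr x j * φ i (b j) := by
        intro i
        conv_lhs => rw [← b.sum_repr x]
        rw [map_sum]
        simp [smul_eq_mul]
      calc (∏ i, φ i x) = ∏ i, ∑ j, b.repr x j * φ i (b j) := by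
            exact Finset.prod_congr rfl (fun i _ => h1 i)
        _ = ∑ m ∈ Fintype.piFinset (fun _ : Fin d => (Finset.univ : Finset (Fin n))),
              ∏ i, (b.repr x (m i) * φ i (b (m i))) := by
            rw [Finset.prod_univ_sum]
        _ = ∑ m : Fin d → Fin n, (∏ i, φ i (b (m i))) * ∏ i, b.repr x (m i) := by
            rw [Fintype.piFinset_univ]
            refine Finset.sum_congr rfl (fun m _ => ?_)
            rw [Finset.prod_mul_distrib, mul_comm]
        _ = (∑ m : Fin d → Fin n, (∏ i, φ i (b (m i))) •
              (fun x : V => ∏ i, b.coord (m i) x)) x := by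
            simp [Finset.sum_apply, Module.Basis.coord_apply]
    rw [hf]
    exact Submodule.sum_mem _ (fun m _ => Submodule.smul_mem _ _
      (Submodule.subset_span (Set.mem_range_self m)))
  have : FiniteDimensional ℂ (Submodule.span ℂ
      (Set.range fun m : Fin d → Fin n => fun x : V => ∏ i, b.coord (m i) x)) := by
    apply FiniteDimensional.span_of_finite
    exact Set.finite_range _
  exact Submodule.finiteDimensional_of_le hle

lemma orbitRing_invariant {W : Type v} [AddCommGroup W] [Module ℂ W]
    (ρ : Representation ℂ K W) (v : W) (d : ℕ) :
    InvariantSub (leftReg K) (orbitRing ρ v d) := by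
  intro g x hx
  obtain ⟨p, hp, rfl⟩ := hx
  have hp' : coordAct ρ g p ∈ polyDeg W d := by
    have hmap : (polyDeg W d).map (coordAct ρ g) ≤ polyDeg W d := by
      rw [polyDeg, Submodule.map_span, Submodule.span_le]
      rintro _ ⟨_, ⟨φ, rfl⟩, rfl⟩
      refine Submodule.subset_span ⟨fun i => (φ i).comp (ρ g⁻¹), ?_⟩
      funext x
      simp [coordAct]
    exact hmap (Submodule.mem_map_of_mem hp)
  refine ⟨coordAct ρ g p, hp', ?_⟩
  funext h
  simp only [orbRes, coordAct, leftReg, LinearMap.coe_mk, AddHom.coe_mk,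
    MonoidHom.coe_mk, OneHom.coe_mk]
  rw [map_mul]
  rfl

lemma orbRes_res (R : Subgroup K) {W : Type v} [AddCommGroup W] [Module ℂ W]
    (ρ : Representation ℂ K W) (v : W) :
    orbRes (ρ.comp R.subtype) v = (resMap R).comp (orbRes ρ v) := rfl

lemma orbitRing_res (R : Subgroup K) {W : Type v} [AddCommGroup W] [Module ℂ W]
    (ρ : Representation ℂ K W) (v : W) (d : ℕ) :
    orbitRing (ρ.comp R.subtype) v d = (orbitRing ρ v d).map (resMap R) := by
  rw [orbitRing, orbitRing, orbRes_res, ← Submodule.map_comp]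

end Orbit


/-- Splitting off an invariant lift of `T` inside `U` along the restriction map. -/
lemma split_step {K : Type} [Group K] (R : Subgroup K) (hRred : LinearlyReductive ↥R)
    (U : Submodule ℂ (K → ℂ)) (hfd : FiniteDimensional ℂ U)
    (hUinv : InvariantSub ((leftReg K).comp R.subtype) U)
    (T : Submodule ℂ (↥R → ℂ)) (hTinv : InvariantSub (leftReg ↥R) T)
    (hTle : T ≤ U.map (resMap R)) :
    ∃ S', S' ≤ U ∧ InvariantSub ((leftReg K).comp R.subtype) S' ∧
      (∀ x ∈ S', resMap R x = 0 → x = 0) ∧ S'.map (resMap R) = T := by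
  haveI := hfd
  set σ' := (leftReg K).comp R.subtype with hσ'
  have hEq : EqMap σ' (leftReg ↥R) (resMap R) := resMap_eqMap R
  set P := U ⊓ Submodule.comap (resMap R) T with hPdef
  have hPinv : InvariantSub σ' P := invSub_inf hUinv (invSub_comap hEq hTinv)
  have hkerinv : InvariantSub σ' (LinearMap.ker (resMap R)) := by
    intro g x hx
    rw [LinearMap.mem_ker] at hx ⊢
    rw [hEq g x, hx, map_zero]
  set N := P ⊓ LinearMap.ker (resMap R) with hNdef
  have hNinv : InvariantSub σ' N := invSub_inf hPinv hkerinv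
  haveI hPfd : FiniteDimensional ℂ P := Submodule.finiteDimensional_of_le inf_le_left
  obtain ⟨S', hS'P, hS'inv, hNinf, hNsup⟩ :=
    exists_compl hRred σ' P N hPfd hPinv hNinv inf_le_left
  have hdisj : ∀ x ∈ S', resMap R x = 0 → x = 0 := by
    intro x hx h0
    have hmem : x ∈ N ⊓ S' := ⟨⟨hS'P hx, h0⟩, hx⟩
    rw [hNinf] at hmem
    simpa using hmem
  have h1 : P.map (resMap R) = T := by
    apply le_antisymm
    · rintro _ ⟨x, hx, rfl⟩
      exact hx.2
    · intro t ht
      obtain ⟨s, hs, rfl⟩ := hTle ht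
      exact ⟨s, ⟨hs, ht⟩, rfl⟩
  have h2 : N.map (resMap R) = ⊥ := by
    rw [eq_bot_iff]
    rintro _ ⟨x, hx, rfl⟩
    simp [LinearMap.mem_ker.mp hx.2]
  refine ⟨S', hS'P.trans inf_le_left, hS'inv, hdisj, ?_⟩
  rw [← h1, ← hNsup, Submodule.map_sup, h2, bot_sup_eq]

/-- Let `K` be a connected reductive group, `R ⊆ K` a reductive subgroup,
`W` a linear `K`-representation, `y ∈ ℙ(W)`, and `Y` the smallest `R`-submodule of `W`
containing `ŷ`. If an irreducible `K`-module `V_β(K)` occurs in `R_W[y]_d`, then some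
irreducible `R`-module occurring in it occurs in `R_Y[y]_d`; conversely, if an irreducible
`R`-module occurs in `R_Y[y]_d` then it occurs in the restriction to `R` of some irreducible
`K`-module occurring in `R_W[y]_d`. -/
theorem stmt8 {K : Type} [Group K] [TopologicalSpace K] [IsTopologicalGroup K] [ConnectedSpace K]
    (hred : LinearlyReductive K)
    (R : Subgroup K) (hRred : LinearlyReductive R)
    {W : Type} [AddCommGroup W] [Module ℂ W] [FiniteDimensional ℂ W]
    (ρW : Representation ℂ K W) (yhat : W) (hy : yhat ≠ 0) (d : ℕ) :
    (∀ S : Submodule ℂ (K → ℂ), S ≤ orbitRing ρW yhat d →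
      IsIrreducibleSub (leftReg K) S →
        ∃ T : Submodule ℂ (R → ℂ), T ≤ orbitRing (ρW.comp R.subtype) yhat d ∧
          IsIrreducibleSub (leftReg R) T ∧
          ∃ S' : Submodule ℂ (K → ℂ), S' ≤ S ∧
            IsIrreducibleSub ((leftReg K).comp R.subtype) S' ∧
            RepIso ((leftReg K).comp R.subtype) (leftReg R) S' T) ∧
    (∀ T : Submodule ℂ (R → ℂ), T ≤ orbitRing (ρW.comp R.subtype) yhat d →
      IsIrreducibleSub (leftReg R) T →
        ∃ S : Submodule ℂ (K → ℂ), S ≤ orbitRing ρW yhat d ∧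
          IsIrreducibleSub (leftReg K) S ∧
          ∃ S' : Submodule ℂ (K → ℂ), S' ≤ S ∧
            IsIrreducibleSub ((leftReg K).comp R.subtype) S' ∧
            RepIso ((leftReg K).comp R.subtype) (leftReg R) S' T) := by
  classical
  haveI hpd : FiniteDimensional ℂ (polyDeg W d) := polyDeg_findim W d
  haveI hor : FiniteDimensional ℂ (orbitRing ρW yhat d) :=
    inferInstanceAs (FiniteDimensional ℂ ((polyDeg W d).map (orbRes ρW yhat)))
  have hresEq := orbitRing_res R ρW yhat d
  have hEq : EqMap ((leftReg K).comp R.subtype) (leftReg ↥R) (resMap R) := resMap_eqMap R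
  constructor
  · intro S hSle hSirr
    haveI : FiniteDimensional ℂ S := Submodule.finiteDimensional_of_le hSle
    have hSinv' : InvariantSub ((leftReg K).comp R.subtype) S := invSub_restrict R hSirr.2.1
    have hmapinv : InvariantSub (leftReg ↥R) (S.map (resMap R)) := invSub_map hEq hSinv'
    have hmapne : S.map (resMap R) ≠ ⊥ := by
      obtain ⟨f, hf, hfne⟩ := (Submodule.ne_bot_iff _).mp hSirr.1
      obtain ⟨k, hk⟩ := Function.ne_iff.mp hfne
      have hf' : leftReg K k⁻¹ f ∈ S := hSirr.2.1 k⁻¹ f hf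
      refine (Submodule.ne_bot_iff _).mpr ⟨resMap R (leftReg K k⁻¹ f),
        Submodule.mem_map_of_mem hf', fun h => ?_⟩
      have h1 : resMap R (leftReg K k⁻¹ f) 1 = f k := by
        simp [resMap, leftReg]
      rw [h] at h1
      exact hk (by simpa using h1.symm)
    haveI : FiniteDimensional ℂ (S.map (resMap R)) := inferInstance
    obtain ⟨T, hTle, hTirr⟩ := exists_irred (leftReg ↥R)
      (Module.finrank ℂ (S.map (resMap R))) (S.map (resMap R)) inferInstance le_rfl
      hmapinv hmapne
    obtain ⟨S', hS'S, hS'inv, hdisj, hS'map⟩ :=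
      split_step R hRred S inferInstance hSinv' T hTirr.2.1 hTle
    have hiso := mapRepIso hEq S' hdisj
    rw [hS'map] at hiso
    have hS'irr := (mapIrr hEq hS'inv hdisj).mpr (by rw [hS'map]; exact hTirr)
    refine ⟨T, ?_, hTirr, S', hS'S, hS'irr, hiso⟩
    rw [hresEq]
    exact hTle.trans (Submodule.map_mono hSle)
  · intro T hTle hTirr
    have hU₀inv : InvariantSub (leftReg K) (orbitRing ρW yhat d) :=
      orbitRing_invariant ρW yhat d
    have hU₀inv' := invSub_restrict R hU₀inv
    have hTle' : T ≤ (orbitRing ρW yhat d).map (resMap R) := by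
      rw [← hresEq]; exact hTle
    obtain ⟨S₀, hS₀le, hS₀inv, hdisj, hS₀map⟩ :=
      split_step R hRred (orbitRing ρW yhat d) inferInstance hU₀inv' T hTirr.2.1 hTle'
    have hiso := mapRepIso hEq S₀ hdisj
    rw [hS₀map] at hiso
    have hS₀irr := (mapIrr hEq hS₀inv hdisj).mpr (by rw [hS₀map]; exact hTirr)
    obtain ⟨S, hSU, hSirr, S'', hS''S, hS''irr, hiso''⟩ :=
      induct_lemma hred R (leftReg K) (Module.finrank ℂ (orbitRing ρW yhat d))
        (orbitRing ρW yhat d) inferInstance le_rfl hU₀inv S₀ hS₀le hS₀irr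
    exact ⟨S, hSU, hSirr, S'', hS''S, hS''irr, repIso_trans hiso'' hiso⟩
end
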